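/- Let s, t be real numbers with 0 < t < 1/2 ≤ s < 1 and s + t > 1. Then the supremum of −log(x⁻¹ − 1)/(y − x) over all pairs (x, y) with 1/2 ≤ x ≤ s, 1 − x < y, and y ≤ t equals log(t⁻¹ − 1)/(2t − 1). -/

import Mathlib

/-!
For fixed `x` the quotient increases as `y ↓ 1 - x`, towards `log (x⁻¹ - 1) / (2x - 1)`.
Writing `x = (1 + u) / 2`, one has
`-log (x⁻¹ - 1) = log (1 + u) - log (1 - u) = ∑ 2 u ^ (2k+1) / (2k+1)`,
so `log (x⁻¹ - 1) / (2x - 1)` is minus a power series in `u²` with positive coefficients,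
hence decreasing in `x` and largest at `x = 1 - t`. The corner value at `(1 - t, t)` is
approached by the admissible points `(x, t)`, `x ↓ 1 - t`.
-/

open Real Set

lemma Real.hasSum_log_one_add_sub_log_one_sub_div {u : ℝ} (hu : |u| < 1) (hu0 : u ≠ 0) :
    HasSum (fun k : ℕ => 2 / (2 * k + 1) * u ^ (2 * k)) ((log (1 + u) - log (1 - u)) / u) := by
  have hterm (k : ℕ) : 2 * (1 / (2 * (k : ℝ) + 1)) * u ^ (2 * k + 1) / u =
      2 / (2 * k + 1) * u ^ (2 * k) := by
    rw [pow_succ]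
    field_simp
  simpa only [hterm] using (hasSum_log_sub_log_of_abs_lt_one hu).div_const u

lemma Real.log_one_add_sub_log_one_sub_div_le {u v : ℝ} (hu : 0 < u) (huv : u ≤ v)
    (hv : v < 1) :
    (log (1 + u) - log (1 - u)) / u ≤ (log (1 + v) - log (1 - v)) / v := by
  refine hasSum_le (fun k => ?_)
    (hasSum_log_one_add_sub_log_one_sub_div (by rw [abs_lt]; constructor <;> linarith) hu.ne')
    (hasSum_log_one_add_sub_log_one_sub_div (by rw [abs_lt]; constructor <;> linarith)
      (hu.trans_le huv).ne')
  gcongr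

lemma Real.log_inv_sub_one_eq {u : ℝ} (hu : |u| < 1) :
    log (((1 + u) / 2)⁻¹ - 1) = log (1 - u) - log (1 + u) := by
  rw [abs_lt] at hu
  have : 1 + u ≠ 0 := by linarith
  rw [← log_div (by linarith) (by linarith)]
  congr 1
  field_simp
  ring

lemma Real.log_inv_sub_one_div_antitoneOn :
    AntitoneOn (fun x : ℝ => log (x⁻¹ - 1) / (2 * x - 1)) (Ioo (1 / 2) 1) := by
  rintro a ⟨ha, -⟩ b ⟨-, hb⟩ hab
  obtain ⟨u, rfl⟩ : ∃ u, a = (1 + u) / 2 := ⟨2 * a - 1, by ring⟩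
  obtain ⟨v, rfl⟩ : ∃ v, b = (1 + v) / 2 := ⟨2 * b - 1, by ring⟩
  have key := log_one_add_sub_log_one_sub_div_le (u := u) (v := v) (by linarith) (by linarith)
    (by linarith)
  have hneg (w : ℝ) : (log (1 - w) - log (1 + w)) / (2 * ((1 + w) / 2) - 1) =
      -((log (1 + w) - log (1 - w)) / w) := by ring
  dsimp only
  rw [log_inv_sub_one_eq (by rw [abs_lt]; constructor <;> linarith),
    log_inv_sub_one_eq (by rw [abs_lt]; constructor <;> linarith), hneg, hneg]
  exact neg_le_neg key

lemma Real.log_one_sub_inv_sub_one {t : ℝ} (ht0 : t ≠ 0) (ht1 : t ≠ 1) :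
    log ((1 - t)⁻¹ - 1) = -log (t⁻¹ - 1) := by
  rw [← log_inv]
  have : 1 - t ≠ 0 := sub_ne_zero.mpr ht1.symm
  have : t⁻¹ - 1 ≠ 0 := sub_ne_zero.mpr (inv_ne_one.mpr ht1)
  congr 1
  field_simp
  ring

lemma Real.neg_log_inv_sub_one_div_sub_le {x y : ℝ} (hx : 1 / 2 < x) (hx1 : x < 1)
    (hxy : 1 - x < y) (hyx : y < x) :
    -log (x⁻¹ - 1) / (y - x) ≤ log (x⁻¹ - 1) / (2 * x - 1) := by
  have hlog : log (x⁻¹ - 1) < 0 := by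
    have : x⁻¹ < 2 := by rw [inv_lt_comm₀ (by linarith) two_pos]; linarith
    exact log_neg (by linarith [one_lt_inv₀ (by linarith : 0 < x) |>.mpr hx1]) (by linarith)
  rw [← neg_sub x y, neg_div_neg_eq, div_le_div_iff₀ (by linarith) (by linarith)]
  nlinarith

lemma Real.neg_log_inv_sub_one_div_sub_le_of_le {t x y : ℝ} (ht : 0 < t) (ht2 : t < 1 / 2)
    (hx1 : x < 1) (hxy : 1 - x < y) (hyt : y ≤ t) :
    -log (x⁻¹ - 1) / (y - x) ≤ log (t⁻¹ - 1) / (2 * t - 1) :=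
  calc -log (x⁻¹ - 1) / (y - x) ≤ log (x⁻¹ - 1) / (2 * x - 1) :=
        neg_log_inv_sub_one_div_sub_le (by linarith) hx1 hxy (by linarith)
    _ ≤ log ((1 - t)⁻¹ - 1) / (2 * (1 - t) - 1) :=
        log_inv_sub_one_div_antitoneOn ⟨by linarith, by linarith⟩ ⟨by linarith, hx1⟩
          (by linarith)
    _ = log (t⁻¹ - 1) / (2 * t - 1) := by
        rw [log_one_sub_inv_sub_one ht.ne' (by linarith),
          show 2 * (1 - t) - 1 = -(2 * t - 1) by ring, neg_div_neg_eq]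

theorem sup_region_plus_case2_general (s t : ℝ) (ht : 0 < t) (ht2 : t < 1 / 2)
    (hs1 : s < 1) (hst : s + t > 1) :
    sSup {r : ℝ | ∃ x y : ℝ, 1 / 2 ≤ x ∧ x ≤ s ∧ 1 - x < y ∧ y ≤ t ∧
      r = -Real.log (x⁻¹ - 1) / (y - x)} = Real.log (t⁻¹ - 1) / (2 * t - 1) := by
  set S := {r : ℝ | ∃ x y : ℝ, 1 / 2 ≤ x ∧ x ≤ s ∧ 1 - x < y ∧ y ≤ t ∧
      r = -Real.log (x⁻¹ - 1) / (y - x)}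
  set g : ℝ → ℝ := fun x => -log (x⁻¹ - 1) / (t - x)
  have hcorner : g (1 - t) = log (t⁻¹ - 1) / (2 * t - 1) := by
    simp only [g, log_one_sub_inv_sub_one ht.ne' (by linarith), neg_neg]
    rw [show t - (1 - t) = 2 * t - 1 by ring]
  have hupper : log (t⁻¹ - 1) / (2 * t - 1) ∈ upperBounds S := by
    rintro r ⟨x, y, -, hxs, hxy, hyt, rfl⟩
    exact neg_log_inv_sub_one_div_sub_le_of_le ht ht2 (by linarith) hxy hyt
  have hsub : g '' Ioc (1 - t) s ⊆ S := by
    rintro _ ⟨x, ⟨hx, hxs⟩, rfl⟩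
    exact ⟨x, t, by linarith, hxs, by linarith, le_rfl, rfl⟩
  have hg : ContinuousWithinAt g (Ioc (1 - t) s) (1 - t) := by
    have : (1 - t)⁻¹ - 1 ≠ 0 := sub_ne_zero.mpr (inv_ne_one.mpr (by linarith))
    exact ContinuousAt.continuousWithinAt (by fun_prop (disch := first | assumption | linarith))
  have hclosure : g (1 - t) ∈ closure S := by
    refine closure_mono hsub (hg.mem_closure_image ?_)
    rw [closure_Ioc (by linarith)]
    exact ⟨le_rfl, by linarith⟩
  rw [← hcorner] at hupper ⊢
  exact (isLUB_of_mem_closure hupper hclosure).csSup_eq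
    ⟨_, hsub ⟨s, ⟨by linarith, le_rfl⟩, rfl⟩⟩

theorem sup_region_plus_case2 (s t : ℝ) (ht : 0 < t) (ht2 : t < 1 / 2)
    (hs : 1 / 2 ≤ s) (hs1 : s < 1) (hst : s + t > 1) :
    sSup {r : ℝ | ∃ x y : ℝ, 1 / 2 ≤ x ∧ x ≤ s ∧ 1 - x < y ∧ y ≤ t ∧
      r = -Real.log (x⁻¹ - 1) / (y - x)} = Real.log (t⁻¹ - 1) / (2 * t - 1) :=
  sup_region_plus_case2_general s t ht ht2 hs1 hst
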